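/- arXiv:2210.02432 — 2 statements merged into one kernel-verified Lean document; each statement's English description precedes it below -/
import Mathlib

section
/- Let H be a complex Hilbert space, H_N ⊂ H a finite-dimensional subspace with basis ψ₁,…,ψ_M, and A : H → H bounded and coercive with constants ‖A‖ and C_coer. Define the Galerkin matrix A_mat by (A_mat)_{ij} = (Aψ_j, ψ_i)_H. Suppose D is a positive diagonal matrix and C₁, C₂ > 0 are such that C₁‖D^{1/2}w‖₂ ≤ ‖w_N‖_H ≤ C₂‖D^{1/2}w‖₂ for all w_N = Σ w_j ψ_j ∈ H_N. Then for all ṽ, w̃ ∈ ℂ^M: |(D^{-1/2}A_mat D^{-1/2} ṽ, w̃)₂| ≤ ‖A‖ C₂² ‖ṽ‖₂‖w̃‖₂ and |(D^{-1/2}A_mat D^{-1/2} ṽ, ṽ)₂| ≥ C_coer C₁² ‖ṽ‖₂². -/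
open scoped BigOperators

/-- Continuity and coercivity of the diagonally preconditioned Galerkin matrix:
with `(A_mat)_{ij} = (Aψ_j, ψ_i)` and `B = D^{-1/2} A_mat D^{-1/2}`, the norm
equivalence `C₁‖D^{1/2}w‖₂ ≤ ‖Σ w_jψ_j‖ ≤ C₂‖D^{1/2}w‖₂` yields
`|(Bṽ,w̃)₂| ≤ ‖A‖C₂²‖ṽ‖₂‖w̃‖₂` and `|(Bṽ,ṽ)₂| ≥ C_coer C₁²‖ṽ‖₂²`. -/
theorem stmt11 {H : Type*} [NormedAddCommGroup H] [InnerProductSpace ℂ H]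
    {M : ℕ} (ψ : Fin M → H) (A : H →L[ℂ] H) (Ccoer : ℝ) (hCcoer : 0 < Ccoer)
    (hcoer : ∀ u : H, Ccoer * ‖u‖ ^ 2 ≤ ‖(inner ℂ (A u) u : ℂ)‖)
    (D : Fin M → ℝ) (hD : ∀ i, 0 < D i)
    (C₁ C₂ : ℝ) (hC₁ : 0 < C₁) (hC₂ : 0 < C₂)
    (hequiv : ∀ w : Fin M → ℂ,
      C₁ * Real.sqrt (∑ j, D j * ‖w j‖ ^ 2) ≤ ‖∑ j, w j • ψ j‖ ∧
        ‖∑ j, w j • ψ j‖ ≤ C₂ * Real.sqrt (∑ j, D j * ‖w j‖ ^ 2))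
    (B : Matrix (Fin M) (Fin M) ℂ)
    (hB : ∀ i j, B i j = ((Real.sqrt (D i))⁻¹ : ℂ) *
      (inner ℂ (A (ψ j)) (ψ i) : ℂ) * ((Real.sqrt (D j))⁻¹ : ℂ)) :
    (∀ v w : EuclideanSpace ℂ (Fin M),
      ‖(inner ℂ ((Matrix.toEuclideanCLM (𝕜 := ℂ) B) v) w : ℂ)‖
        ≤ ‖A‖ * C₂ ^ 2 * ‖v‖ * ‖w‖) ∧
    (∀ v : EuclideanSpace ℂ (Fin M),
      Ccoer * C₁ ^ 2 * ‖v‖ ^ 2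
        ≤ ‖(inner ℂ ((Matrix.toEuclideanCLM (𝕜 := ℂ) B) v) v : ℂ)‖) := by
  have hdpos : ∀ i, 0 < Real.sqrt (D i) := fun i => Real.sqrt_pos.2 (hD i)
  set u : (Fin M → ℂ) → H :=
    fun v => ∑ j, ((((Real.sqrt (D j))⁻¹ : ℝ) : ℂ) * (starRingEnd ℂ) (v j)) • ψ j with hu
  -- norm identity
  have hnorm : ∀ v : EuclideanSpace ℂ (Fin M),
      Real.sqrt (∑ j, D j *
        ‖(((Real.sqrt (D j))⁻¹ : ℝ) : ℂ) * (starRingEnd ℂ) (v j)‖ ^ 2) = ‖v‖ := by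
    intro v
    rw [EuclideanSpace.norm_eq]
    congr 1
    refine Finset.sum_congr rfl fun j _ => ?_
    rw [norm_mul, RCLike.norm_conj, Complex.norm_real, Real.norm_eq_abs,
      abs_of_pos (inv_pos.2 (hdpos j))]
    rw [mul_pow]
    have h2 : (Real.sqrt (D j))⁻¹ ^ 2 = (D j)⁻¹ := by
      rw [← Real.sqrt_inv, Real.sq_sqrt (inv_nonneg.2 (hD j).le)]
    rw [h2, ← mul_assoc, mul_inv_cancel₀ (hD j).ne', one_mul]
  have hub : ∀ v : EuclideanSpace ℂ (Fin M), ‖u v‖ ≤ C₂ * ‖v‖ := by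
    intro v
    have := (hequiv fun j => (((Real.sqrt (D j))⁻¹ : ℝ) : ℂ) * (starRingEnd ℂ) (v j)).2
    rwa [hnorm v] at this
  have hlb : ∀ v : EuclideanSpace ℂ (Fin M), C₁ * ‖v‖ ≤ ‖u v‖ := by
    intro v
    have := (hequiv fun j => (((Real.sqrt (D j))⁻¹ : ℝ) : ℂ) * (starRingEnd ℂ) (v j)).1
    rwa [hnorm v] at this
  -- inner identity
  have hinner : ∀ v w : EuclideanSpace ℂ (Fin M),
      (inner ℂ ((Matrix.toEuclideanCLM (𝕜 := ℂ) B) v) w : ℂ) = inner ℂ (u w) (A (u v)) := by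
    intro v w
    have happ : ∀ i, ((Matrix.toEuclideanCLM (𝕜 := ℂ) B) v) i = B.mulVec v i := fun i => rfl
    rw [PiLp.inner_apply]
    simp only [happ, RCLike.inner_apply, Matrix.mulVec, dotProduct, map_sum, map_mul,
      Finset.sum_mul, Finset.mul_sum]
    rw [Finset.sum_comm]
    simp only [hu, map_sum, sum_inner, inner_smul_left, inner_sum, inner_smul_right,
      map_smul, Finset.mul_sum, Finset.sum_mul, map_mul]
    refine Finset.sum_congr rfl fun j _ => Finset.sum_congr rfl fun i _ => ?_
    rw [hB i j]
    simp only [map_mul, map_inv₀, Complex.conj_ofReal, Complex.ofReal_inv, Complex.conj_conj, ← inner_conj_symm (ψ i) (A (ψ j))]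
    ring
  constructor
  · intro v w
    rw [hinner v w]
    calc ‖(inner ℂ (u w) (A (u v)) : ℂ)‖ ≤ ‖u w‖ * ‖A (u v)‖ := norm_inner_le_norm _ _
      _ ≤ ‖u w‖ * (‖A‖ * ‖u v‖) := by
            exact mul_le_mul_of_nonneg_left (A.le_opNorm _) (norm_nonneg _)
      _ ≤ (C₂ * ‖w‖) * (‖A‖ * (C₂ * ‖v‖)) := by
            refine mul_le_mul (hub w) (mul_le_mul_of_nonneg_left (hub v) (norm_nonneg _)) ?_ ?_
            · positivity
            · positivity
      _ = ‖A‖ * C₂ ^ 2 * ‖v‖ * ‖w‖ := by ring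
  · intro v
    rw [hinner v v]
    have h1 : Ccoer * ‖u v‖ ^ 2 ≤ ‖(inner ℂ (A (u v)) (u v) : ℂ)‖ := hcoer (u v)
    rw [← inner_conj_symm, RCLike.norm_conj] at h1
    calc Ccoer * C₁ ^ 2 * ‖v‖ ^ 2 = Ccoer * (C₁ * ‖v‖) ^ 2 := by ring
      _ ≤ Ccoer * ‖u v‖ ^ 2 :=
            mul_le_mul_of_nonneg_left
              (pow_le_pow_left₀ (by positivity) (hlb v) 2) hCcoer.le
      _ ≤ _ := h1
end

section
/- Let D ⊂ ℝᵈ be a bounded Lipschitz open set with outward unit normal ν. Then D is star-shaped with respect to the ball B_κ(x₀) for some κ > 0 if and only if (x − x₀)·ν(x) ≥ κ for almost every x ∈ ∂D (i.e., for all x where ν(x) is defined). -/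
open Metric
open scoped RealInnerProductSpace

noncomputable section


/-- `n` is an outward unit normal to `D` at the boundary point `x`:
points of `D` near `x` lie (to first order) on the side of the tangent
hyperplane opposite to `n`. -/
def IsOutwardNormalAt {d : ℕ} (D : Set (EuclideanSpace ℝ (Fin d)))
    (x n : EuclideanSpace ℝ (Fin d)) : Prop :=
  x ∈ frontier D ∧ ‖n‖ = 1 ∧
    ∀ ε > 0, ∃ δ > 0, ∀ y ∈ D, ‖y - x‖ < δ →
      (inner ℝ (y - x) n : ℝ) ≤ ε * ‖y - x‖

/-- `D` has a Lipschitz boundary: near each boundary point, `D` is the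
hypograph of a Lipschitz function in some rotated coordinate system. -/
def HasLipschitzBoundary {d : ℕ} (D : Set (EuclideanSpace ℝ (Fin d))) : Prop :=
  ∀ x ∈ frontier D, ∃ r : ℝ, 0 < r ∧
    ∃ e : EuclideanSpace ℝ (Fin d), ‖e‖ = 1 ∧
      ∃ (F : EuclideanSpace ℝ (Fin d) → ℝ) (L : NNReal), LipschitzWith L F ∧
        ∀ y ∈ Metric.ball x r,
          (y ∈ D ↔ (inner ℝ y e : ℝ) < F (y - ((inner ℝ y e : ℝ)) • e))

/-- exterior-ball points give outward normals -/
lemma normal_of_nearest {d : ℕ} {D : Set (EuclideanSpace ℝ (Fin d))} (hopen : IsOpen D)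
    {q p : EuclideanSpace ℝ (Fin d)} (hp : p ∈ closure D) (hq : q ∉ closure D)
    (hmin : ∀ y ∈ D, ‖q - p‖ ≤ ‖q - y‖) :
    IsOutwardNormalAt D p (‖q - p‖⁻¹ • (q - p)) := by
  have hne : q ≠ p := fun h => hq (h ▸ hp)
  have hρ : 0 < ‖q - p‖ := by
    simpa [sub_eq_zero] using hne
  have hpD : p ∉ D := by
    intro hpD
    rcases Metric.isOpen_iff.1 hopen p hpD with ⟨r, hr, hball⟩
    set t : ℝ := min (2⁻¹) (r / (2 * ‖q - p‖)) with ht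
    have ht0 : 0 < t := lt_min (by norm_num) (by positivity)
    have ht1 : t < 1 := lt_of_le_of_lt (min_le_left _ _) (by norm_num)
    have hy : p + t • (q - p) ∈ D := by
      apply hball
      have hn : ‖t • (q - p)‖ = t * ‖q - p‖ := by
        rw [norm_smul, Real.norm_eq_abs, abs_of_pos ht0]
      have h2 : t * ‖q - p‖ ≤ (r / (2 * ‖q - p‖)) * ‖q - p‖ :=
        mul_le_mul_of_nonneg_right (min_le_right _ _) hρ.le
      have h3 : (r / (2 * ‖q - p‖)) * ‖q - p‖ = r / 2 := by
        field_simp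
      simp only [mem_ball, dist_eq_norm, add_sub_cancel_left]
      rw [hn]
      linarith
    have hm := hmin _ hy
    have hcalc : q - (p + t • (q - p)) = (1 - t) • (q - p) := by
      module
    rw [hcalc, norm_smul, Real.norm_eq_abs, abs_of_pos (by linarith)] at hm
    nlinarith
  refine ⟨⟨hp, by simpa [hopen.interior_eq] using hpD⟩, ?_, ?_⟩
  · rw [norm_smul, Real.norm_eq_abs, abs_of_pos (by positivity), inv_mul_cancel₀ hρ.ne']
  · intro ε hε
    refine ⟨2 * ‖q - p‖ * ε, by positivity, fun y hy hyd => ?_⟩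
    have h1 : ‖q - p‖ ≤ ‖q - y‖ := hmin y hy
    have h2 : ‖q - y‖ ^ 2 = ‖q - p‖ ^ 2 - 2 * ⟪y - p, q - p⟫ + ‖y - p‖ ^ 2 := by
      have hd : q - y = (q - p) - (y - p) := by abel
      rw [hd, @norm_sub_sq_real, real_inner_comm]
    have h3 : ⟪y - p, q - p⟫ ≤ ‖y - p‖ ^ 2 / 2 := by nlinarith
    have hi : (inner ℝ (y - p) (‖q - p‖⁻¹ • (q - p)) : ℝ) = ‖q - p‖⁻¹ * ⟪y - p, q - p⟫ := by
      rw [real_inner_smul_right]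
    rw [hi, inv_mul_le_iff₀ hρ]
    nlinarith [norm_nonneg (y - p), hε]

lemma key_ineq {d : ℕ} {D : Set (EuclideanSpace ℝ (Fin d))} (hopen : IsOpen D)
    (hbdd : Bornology.IsBounded D) {x₀ : EuclideanSpace ℝ (Fin d)} {κ : ℝ}
    (H : ∀ x n, IsOutwardNormalAt D x n → κ ≤ (inner ℝ (x - x₀) n : ℝ))
    (hne : D.Nonempty) {q : EuclideanSpace ℝ (Fin d)} (hq : q ∉ closure D) :
    ∃ p ∈ closure D, ‖q - p‖ = Metric.infDist q D ∧
      κ * ‖q - p‖ ≤ ⟪p - x₀, q - p⟫ := by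
  have hcpt : IsCompact (closure D) := hbdd.isCompact_closure
  obtain ⟨p, hp, hpd⟩ := hcpt.exists_infDist_eq_dist (hne.closure) q
  have hdist : ‖q - p‖ = Metric.infDist q D := by
    rw [← Metric.infDist_closure, hpd, dist_eq_norm]
  have hmin : ∀ y ∈ D, ‖q - p‖ ≤ ‖q - y‖ := by
    intro y hy
    rw [← dist_eq_norm, ← dist_eq_norm, ← hpd]
    exact Metric.infDist_le_dist_of_mem (subset_closure hy)
  have hρ : 0 < ‖q - p‖ := by
    have : q ≠ p := fun h => hq (h ▸ hp)
    simpa [sub_eq_zero] using this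
  have hH := H p _ (normal_of_nearest hopen hp hq hmin)
  rw [real_inner_smul_right] at hH
  refine ⟨p, hp, hdist, ?_⟩
  calc κ * ‖q - p‖ ≤ (‖q - p‖⁻¹ * ⟪p - x₀, q - p⟫) * ‖q - p‖ :=
        mul_le_mul_of_nonneg_right hH hρ.le
    _ = ⟪p - x₀, q - p⟫ := by field_simp

lemma arith_contra {U s M A Δ R : ℝ} (hU : 0 < U) (hs0 : 0 < s) (hΔ : 0 < Δ)
    (hid : R - A = Δ) (hs2 : s * (M ^ 2 + 1) ≤ U * Δ)
    (hlt : (U - s * A) ^ 2 < U ^ 2 - 2 * s * (U * R) + s ^ 2 * M ^ 2) : False := by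
  nlinarith [sq_nonneg (s * A), mul_pos hs0 (mul_pos hU hΔ),
    mul_le_mul_of_nonneg_left hs2 hs0.le]

lemma gronwall {d : ℕ} {D : Set (EuclideanSpace ℝ (Fin d))} (hopen : IsOpen D)
    (hbdd : Bornology.IsBounded D) {x₀ : EuclideanSpace ℝ (Fin d)} {κ : ℝ} (hκ : 0 < κ)
    (H : ∀ x n, IsOutwardNormalAt D x n → κ ≤ (inner ℝ (x - x₀) n : ℝ))
    (hne : D.Nonempty) {w : EuclideanSpace ℝ (Fin d)} (hw : w ∉ closure D)
    {θ : ℝ} (hθ0 : 0 < θ) (hθ1 : θ < 1) :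
    ∀ τ : ℝ, 0 ≤ τ →
      θ * (Metric.infDist w D * (1 + τ) + κ * τ) ≤
        Metric.infDist (w + τ • (w - x₀)) D := by
  obtain ⟨u₀, hu₀def⟩ : ∃ u₀ : ℝ, u₀ = Metric.infDist w D := ⟨_, rfl⟩
  obtain ⟨c, hc⟩ : ∃ c : ℝ → EuclideanSpace ℝ (Fin d),
      c = fun τ => w + τ • (w - x₀) := ⟨_, rfl⟩
  obtain ⟨u, hu⟩ : ∃ u : ℝ → ℝ, u = fun τ => Metric.infDist (c τ) D := ⟨_, rfl⟩
  obtain ⟨h, hh⟩ : ∃ h : ℝ → ℝ, h = fun τ => θ * (u₀ * (1 + τ) + κ * τ) := ⟨_, rfl⟩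
  suffices hgoal : ∀ τ : ℝ, 0 ≤ τ → h τ ≤ u τ by
    intro τ hτ
    have := hgoal τ hτ
    rw [hh, hu, hc] at this
    simp only [hu₀def] at this
    exact this
  have hu₀ : 0 < u₀ := by
    rw [hu₀def, ← Metric.infDist_closure]
    exact (isClosed_closure.notMem_iff_infDist_pos hne.closure).1 hw
  have hucont : Continuous u := by
    rw [hu, hc]
    exact (Metric.continuous_infDist_pt D).comp (by fun_prop)
  have hhcont : Continuous h := by rw [hh]; fun_prop
  by_contra hcon
  push_neg at hcon
  obtain ⟨τ₁, hτ₁0, hτ₁⟩ := hcon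
  set S : Set ℝ := {τ | 0 ≤ τ ∧ u τ ≤ h τ} with hS
  have hSc : IsClosed S :=
    (isClosed_le continuous_const continuous_id).inter (isClosed_le hucont hhcont)
  have hSne : S.Nonempty := ⟨τ₁, hτ₁0, hτ₁.le⟩
  have hSbd : BddBelow S := ⟨0, fun t ht => ht.1⟩
  obtain ⟨T, hT⟩ : ∃ T : ℝ, T = sInf S := ⟨_, rfl⟩
  have hTS : T ∈ S := hT ▸ hSc.csInf_mem hSne hSbd
  have hu0 : u 0 = u₀ := by rw [hu, hc]; simp [hu₀def]
  have hh0 : h 0 = θ * u₀ := by rw [hh]; ring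
  have hT0 : 0 < T := by
    rcases hTS.1.lt_or_eq with h' | h'
    · exact h'
    · exfalso
      have h2 : u 0 ≤ h 0 := by rw [h']; exact hTS.2
      rw [hu0, hh0] at h2
      nlinarith
  have hbefore : ∀ t, 0 ≤ t → t < T → h t < u t := by
    intro t ht0 htT
    by_contra hle
    push_neg at hle
    have := csInf_le hSbd (⟨ht0, hle⟩ : t ∈ S)
    rw [← hT] at this
    linarith
  have hUeq : u T = h T := by
    refine le_antisymm hTS.2 ?_
    have hsub : Set.Ico (0:ℝ) T ⊆ {t | h t ≤ u t} := fun t ht => (hbefore t ht.1 ht.2).le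
    have hclosed : IsClosed {t | h t ≤ u t} := isClosed_le hhcont hucont
    have hmemT : T ∈ closure (Set.Ico (0:ℝ) T) := by
      rw [closure_Ico hT0.ne]
      exact ⟨hT0.le, le_refl T⟩
    have h2 := closure_mono hsub hmemT
    rw [hclosed.closure_eq] at h2
    exact h2
  obtain ⟨U, hUdef⟩ : ∃ U : ℝ, U = u T := ⟨_, rfl⟩
  have hUh : U = h T := by rw [hUdef, hUeq]
  have hUval : U = θ * (u₀ * (1 + T) + κ * T) := by rw [hUh, hh]
  have hUpos : 0 < U := by
    rw [hUval]
    have h1 : 0 < u₀ * (1 + T) + κ * T := by nlinarith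
    exact mul_pos hθ0 h1
  have hcT : c T ∉ closure D := by
    intro hmem
    have h0 : u T = 0 := by
      simp only [hu]
      rw [← Metric.infDist_closure]
      exact Metric.infDist_zero_of_mem hmem
    rw [← hUdef] at h0
    linarith
  obtain ⟨p, hp, hpd, hpk⟩ := key_ineq hopen hbdd H hne hcT
  have hpdU : ‖c T - p‖ = U := by
    rw [hpd, hUdef]
    simp only [hu]
  obtain ⟨M, hM⟩ : ∃ M : ℝ, M = ‖w - x₀‖ := ⟨_, rfl⟩
  obtain ⟨Δ, hΔ⟩ : ∃ Δ : ℝ, Δ = κ * (1 - θ) / (1 + T) := ⟨_, rfl⟩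
  have hΔpos : 0 < Δ := by
    rw [hΔ]
    have : 0 < 1 - θ := by linarith
    have h1T : 0 < 1 + T := by linarith
    positivity
  have hA0 : 0 < θ * (u₀ + κ) := mul_pos hθ0 (by linarith)
  obtain ⟨s, hs⟩ : ∃ s : ℝ,
      s = min T (min (U / (θ * (u₀ + κ))) (U * Δ / (M ^ 2 + 1))) := ⟨_, rfl⟩
  have hs0 : 0 < s := by
    rw [hs]
    exact lt_min hT0 (lt_min (div_pos hUpos hA0)
      (div_pos (mul_pos hUpos hΔpos) (by positivity)))
  have hsT : s ≤ T := by rw [hs]; exact min_le_left _ _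
  have hs1 : s * (θ * (u₀ + κ)) ≤ U := by
    have h1 : s ≤ U / (θ * (u₀ + κ)) := by
      rw [hs]; exact (min_le_right _ _).trans (min_le_left _ _)
    rw [← le_div_iff₀ hA0]
    exact h1
  have hs2 : s * (M ^ 2 + 1) ≤ U * Δ := by
    have h1 : s ≤ U * Δ / (M ^ 2 + 1) := by
      rw [hs]; exact (min_le_right _ _).trans (min_le_right _ _)
    rw [← le_div_iff₀ (by positivity : (0:ℝ) < M ^ 2 + 1)]
    exact h1
  have h1T : (0:ℝ) < 1 + T := by linarith
  -- inner product bound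
  have hinner : U * (κ + U) / (1 + T) ≤ ⟪c T - p, w - x₀⟫ := by
    have hcx : c T - x₀ = (1 + T) • (w - x₀) := by rw [hc]; module
    have expand : ((1 + T) : ℝ) * ⟪c T - p, w - x₀⟫
        = ‖c T - p‖ ^ 2 + ⟪p - x₀, c T - p⟫ := by
      rw [← real_inner_smul_right, ← hcx]
      have hsplit : c T - x₀ = (c T - p) + (p - x₀) := by abel
      rw [hsplit, inner_add_right, real_inner_self_eq_norm_sq, real_inner_comm]
    rw [div_le_iff₀ h1T, mul_comm (⟪c T - p, w - x₀⟫) (1 + T), expand, hpdU]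
    nlinarith [hpk, hpdU]
  -- geometric bound
  have hA : u (T - s) ^ 2 ≤ U ^ 2 - 2 * s * (U * ((κ + U) / (1 + T))) + s ^ 2 * M ^ 2 := by
    have hle : u (T - s) ≤ ‖c (T - s) - p‖ := by
      simp only [hu]
      rw [← Metric.infDist_closure, ← dist_eq_norm]
      exact Metric.infDist_le_dist_of_mem hp
    have hcs : c (T - s) - p = (c T - p) - s • (w - x₀) := by rw [hc]; module
    have hexp : ‖c (T - s) - p‖ ^ 2
        = U ^ 2 - 2 * (s * ⟪c T - p, w - x₀⟫) + s ^ 2 * M ^ 2 := by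
      rw [hcs, @norm_sub_sq_real, real_inner_smul_right, norm_smul, Real.norm_eq_abs,
        abs_of_pos hs0, hpdU, ← hM, mul_pow]
    have h0 : 0 ≤ u (T - s) := by simp only [hu]; exact Metric.infDist_nonneg
    have hmul : s * (U * ((κ + U) / (1 + T))) ≤ s * ⟪c T - p, w - x₀⟫ := by
      apply mul_le_mul_of_nonneg_left _ hs0.le
      rw [← mul_div_assoc]
      exact hinner
    have hsq : u (T - s) ^ 2 ≤ ‖c (T - s) - p‖ ^ 2 := pow_le_pow_left₀ h0 hle 2
    rw [hexp] at hsq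
    linarith
  -- first crossing bound
  have hB : U - s * (θ * (u₀ + κ)) < u (T - s) := by
    have h1 : h (T - s) < u (T - s) := hbefore (T - s) (by linarith) (by linarith)
    have h2 : h (T - s) = h T - s * (θ * (u₀ + κ)) := by rw [hh]; ring
    rw [h2, ← hUh] at h1
    linarith
  have hBnn : 0 ≤ U - s * (θ * (u₀ + κ)) := by linarith
  have hB2 : (U - s * (θ * (u₀ + κ))) ^ 2 < u (T - s) ^ 2 := by
    exact pow_lt_pow_left₀ hB hBnn (by norm_num)
  have hΔid : (κ + U) / (1 + T) - θ * (u₀ + κ) = Δ := by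
    rw [hUval, hΔ]
    field_simp
    ring
  have hlt := lt_of_lt_of_le hB2 hA
  exact arith_contra (A := θ * (u₀ + κ)) (R := (κ + U) / (1 + T)) hUpos hs0 hΔpos hΔid hs2 hlt

lemma exists_exterior_near {d : ℕ} {D : Set (EuclideanSpace ℝ (Fin d))} (hopen : IsOpen D)
    (hLip : HasLipschitzBoundary D) {w : EuclideanSpace ℝ (Fin d)} (hw : w ∉ D) :
    ∀ ε > 0, ∃ w' : EuclideanSpace ℝ (Fin d), w' ∉ closure D ∧ ‖w' - w‖ < ε := by
  intro ε hε
  by_cases hwc : w ∈ closure D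
  · have hwf : w ∈ frontier D := ⟨hwc, by simpa [hopen.interior_eq] using hw⟩
    obtain ⟨r, hr, e, he, F, L, hF, hgraph⟩ := hLip w hwf
    have hwcc : w ∈ closure Dᶜ := by
      rw [closure_compl]
      simpa [hopen.interior_eq] using hw
    set β : ℝ := min r ε / 4 with hβ
    have hβ0 : 0 < β := by positivity
    obtain ⟨y₁, hy₁n, hy₁d⟩ := Metric.mem_closure_iff.1 hwcc β hβ0
    have hy₁D : y₁ ∉ D := hy₁n
    have hy₁ball : y₁ ∈ Metric.ball w r := by
      rw [Metric.mem_ball, dist_comm]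
      calc dist w y₁ < β := hy₁d
        _ ≤ r / 4 := by rw [hβ]; exact div_le_div_of_nonneg_right (min_le_left _ _) (by norm_num)
        _ < r := by linarith
    have hgy₁ : F (y₁ - ((inner ℝ y₁ e : ℝ)) • e) ≤ (inner ℝ y₁ e : ℝ) := by
      by_contra hlt
      push_neg at hlt
      exact hy₁D ((hgraph y₁ hy₁ball).2 hlt)
    set y₂ : EuclideanSpace ℝ (Fin d) := y₁ + β • e with hy₂
    have hinner2 : (inner ℝ y₂ e : ℝ) = (inner ℝ y₁ e : ℝ) + β := by
      rw [hy₂, inner_add_left, real_inner_smul_left, real_inner_self_eq_norm_sq, he]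
      ring
    have harg : y₂ - ((inner ℝ y₂ e : ℝ)) • e = y₁ - ((inner ℝ y₁ e : ℝ)) • e := by
      rw [hinner2, hy₂]
      module
    have hy₂pos : F (y₂ - ((inner ℝ y₂ e : ℝ)) • e) < (inner ℝ y₂ e : ℝ) := by
      rw [harg, hinner2]
      linarith
    have hy₂w : ‖y₂ - w‖ < 2 * β := by
      have h1 : ‖y₁ - w‖ < β := by rw [← dist_eq_norm, dist_comm]; exact hy₁d
      have h2 : y₂ - w = (y₁ - w) + β • e := by rw [hy₂]; abel
      calc ‖y₂ - w‖ ≤ ‖y₁ - w‖ + ‖β • e‖ := by rw [h2]; exact norm_add_le _ _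
        _ = ‖y₁ - w‖ + β := by rw [norm_smul, Real.norm_eq_abs, abs_of_pos hβ0, he, mul_one]
        _ < 2 * β := by linarith
    have hy₂ball : y₂ ∈ Metric.ball w r := by
      rw [Metric.mem_ball, dist_eq_norm]
      calc ‖y₂ - w‖ < 2 * β := hy₂w
        _ ≤ r / 2 := by rw [hβ]; nlinarith [min_le_left r ε]
        _ < r := by linarith
    refine ⟨y₂, ?_, ?_⟩
    · -- y₂ has an open neighborhood disjoint from D
      set V : Set (EuclideanSpace ℝ (Fin d)) :=
        Metric.ball w r ∩ {y | F (y - ((inner ℝ y e : ℝ)) • e) < (inner ℝ y e : ℝ)} with hV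
      have hVopen : IsOpen V := by
        apply Metric.isOpen_ball.inter
        apply isOpen_lt
        · apply hF.continuous.comp
          have h1 : Continuous fun y : EuclideanSpace ℝ (Fin d) => (inner ℝ y e : ℝ) :=
            Continuous.inner continuous_id continuous_const
          fun_prop
        · exact Continuous.inner continuous_id continuous_const
      have hy₂V : y₂ ∈ V := ⟨hy₂ball, hy₂pos⟩
      have hVD : V ∩ D = ∅ := by
        ext y
        simp only [Set.mem_inter_iff, Set.mem_empty_iff_false, iff_false]
        rintro ⟨⟨hyb, hyl⟩, hyD⟩
        exact absurd ((hgraph y hyb).1 hyD) (not_lt.2 hyl.le)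
      intro hy₂c
      obtain ⟨q, hqV, hqD⟩ := mem_closure_iff.1 hy₂c V hVopen hy₂V
      have hmem : q ∈ V ∩ D := ⟨hqV, hqD⟩
      rw [hVD] at hmem
      exact hmem
    · calc ‖y₂ - w‖ < 2 * β := hy₂w
        _ ≤ ε / 2 := by rw [hβ]; nlinarith [min_le_right r ε]
        _ < ε := by linarith
  · exact ⟨w, hwc, by simpa using hε⟩

lemma no_escape {d : ℕ} {D : Set (EuclideanSpace ℝ (Fin d))} (hopen : IsOpen D)
    (hbdd : Bornology.IsBounded D) (hLip : HasLipschitzBoundary D)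
    {x₀ : EuclideanSpace ℝ (Fin d)} {κ : ℝ} (hκ : 0 < κ)
    (H : ∀ x n, IsOutwardNormalAt D x n → κ ≤ (inner ℝ (x - x₀) n : ℝ))
    {z w : EuclideanSpace ℝ (Fin d)} (hz : z ∈ Metric.ball x₀ κ) (hw : w ∉ D)
    {τ : ℝ} (hτ : 0 < τ) (hxD : w + τ • (w - z) ∈ D) : False := by
  have hne : D.Nonempty := ⟨_, hxD⟩
  have hzd : dist z x₀ < κ := Metric.mem_ball.1 hz
  set δ₀ : ℝ := κ - dist z x₀ with hδ₀
  have hδ₀0 : 0 < δ₀ := by rw [hδ₀]; linarith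
  have hδ₀κ : δ₀ ≤ κ := by rw [hδ₀]; have := dist_nonneg (x := z) (y := x₀); linarith
  set θ : ℝ := 1 - δ₀ / (2 * κ) with hθ
  have hθ0 : 0 < θ := by
    rw [hθ]
    have : δ₀ / (2 * κ) ≤ 1 / 2 := by
      rw [div_le_div_iff₀ (by positivity) (by norm_num)]
      linarith
    linarith
  have hθ1 : θ < 1 := by
    rw [hθ]
    have : 0 < δ₀ / (2 * κ) := by positivity
    linarith
  set ε : ℝ := τ * δ₀ / (4 * (1 + τ)) with hε
  have hε0 : 0 < ε := by rw [hε]; positivity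
  obtain ⟨w', hw'c, hw'd⟩ := exists_exterior_near hopen hLip hw ε hε0
  have hgron := gronwall hopen hbdd hκ H hne hw'c hθ0 hθ1 τ hτ.le
  have hupper : Metric.infDist (w' + τ • (w' - x₀)) D ≤ (1 + τ) * ε + τ * (κ - δ₀) := by
    have h1 : Metric.infDist (w' + τ • (w' - x₀)) D ≤ dist (w' + τ • (w' - x₀)) (w + τ • (w - z)) :=
      Metric.infDist_le_dist_of_mem hxD
    have h2 : (w' + τ • (w' - x₀)) - (w + τ • (w - z)) = (1 + τ) • (w' - w) + τ • (z - x₀) := by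
      module
    have h3 : dist (w' + τ • (w' - x₀)) (w + τ • (w - z)) ≤ (1 + τ) * ‖w' - w‖ + τ * ‖z - x₀‖ := by
      rw [dist_eq_norm, h2]
      calc ‖(1 + τ) • (w' - w) + τ • (z - x₀)‖ ≤ ‖(1 + τ) • (w' - w)‖ + ‖τ • (z - x₀)‖ :=
            norm_add_le _ _
        _ = (1 + τ) * ‖w' - w‖ + τ * ‖z - x₀‖ := by
            rw [norm_smul, norm_smul, Real.norm_eq_abs, Real.norm_eq_abs,
              abs_of_pos (by linarith : (0:ℝ) < 1 + τ), abs_of_pos hτ]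
    have h4 : ‖z - x₀‖ = κ - δ₀ := by rw [hδ₀, ← dist_eq_norm]; ring
    have h5 : (1 + τ) * ‖w' - w‖ + τ * ‖z - x₀‖ ≤ (1 + τ) * ε + τ * (κ - δ₀) := by
      rw [h4]
      have : (1 + τ) * ‖w' - w‖ ≤ (1 + τ) * ε :=
        mul_le_mul_of_nonneg_left hw'd.le (by linarith)
      linarith
    linarith
  have hlower : θ * κ * τ ≤ Metric.infDist (w' + τ • (w' - x₀)) D := by
    refine le_trans ?_ hgron
    have h1 : 0 ≤ Metric.infDist w' D := Metric.infDist_nonneg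
    nlinarith [mul_nonneg hθ0.le (mul_nonneg h1 (by linarith : (0:ℝ) ≤ 1 + τ))]
  have hθκτ : θ * κ * τ = κ * τ - δ₀ * τ / 2 := by
    rw [hθ]
    field_simp
  have hεval : (1 + τ) * ε = τ * δ₀ / 4 := by
    rw [hε]
    field_simp
  have hchain := le_trans hlower hupper
  rw [hθκτ, hεval] at hchain
  nlinarith [mul_pos hδ₀0 hτ]

set_option maxHeartbeats 1600000 in
/-- A bounded Lipschitz open set `D` is star-shaped with respect to the ball
`B_κ(x₀)` (with `κ > 0`) if and only if `(x − x₀)·ν(x) ≥ κ` for every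
boundary point `x` at which the outward unit normal `ν(x)` is defined. -/
theorem stmt12 {d : ℕ} (D : Set (EuclideanSpace ℝ (Fin d))) (hopen : IsOpen D)
    (hbdd : Bornology.IsBounded D) (hLip : HasLipschitzBoundary D)
    (x₀ : EuclideanSpace ℝ (Fin d)) (κ : ℝ) (hκ : 0 < κ) :
    (∀ z ∈ Metric.ball x₀ κ, ∀ x ∈ D, segment ℝ z x ⊆ D) ↔
      (∀ x n, IsOutwardNormalAt D x n → κ ≤ (inner ℝ (x - x₀) n : ℝ)) := by
  constructor
  · -- star-shaped implies normal inequality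
    rintro hstar x n ⟨hxf, hn, hcond⟩
    have hxcl : x ∈ closure D := frontier_subset_closure hxf
    have step1 : ∀ z ∈ Metric.ball x₀ κ, 0 ≤ ⟪x - z, n⟫ := by
      intro z hz
      by_contra hneg
      push_neg at hneg
      have hc : 0 < ⟪z - x, n⟫ := by
        have : z - x = -(x - z) := by abel
        rw [this, inner_neg_left]
        linarith
      obtain ⟨cv, hcv⟩ : ∃ cv : ℝ, cv = ⟪z - x, n⟫ := ⟨_, rfl⟩
      rw [← hcv] at hc
      obtain ⟨nz, hnz⟩ : ∃ nz : ℝ, nz = ‖z - x‖ := ⟨_, rfl⟩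
      have hnz0 : 0 ≤ nz := hnz ▸ norm_nonneg _
      obtain ⟨ε, hεdef⟩ : ∃ ε : ℝ, ε = min 1 (cv / (2 * (nz + 2))) := ⟨_, rfl⟩
      have hε0 : 0 < ε := hεdef ▸ lt_min one_pos (by positivity)
      have hε1 : ε ≤ 1 := hεdef ▸ min_le_left _ _
      have hεcv : ε * (2 * (nz + 2)) ≤ cv := by
        have h1 : ε ≤ cv / (2 * (nz + 2)) := hεdef ▸ min_le_right _ _
        rw [← le_div_iff₀ (by positivity : (0:ℝ) < 2 * (nz + 2))]
        exact h1
      obtain ⟨δ, hδ0, hcd⟩ := hcond ε hε0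
      obtain ⟨s, hsdef⟩ : ∃ s : ℝ, s = min (1/2) (δ / (2 * (nz + 1))) := ⟨_, rfl⟩
      have hs0 : 0 < s := hsdef ▸ lt_min (by norm_num) (by positivity)
      have hs1 : s ≤ 1/2 := hsdef ▸ min_le_left _ _
      have hszx : s * nz ≤ δ / 2 := by
        have h1 : s ≤ δ / (2 * (nz + 1)) := hsdef ▸ min_le_right _ _
        have h2 : s * nz ≤ (δ / (2 * (nz + 1))) * nz :=
          mul_le_mul_of_nonneg_right h1 hnz0
        have h3 : (δ / (2 * (nz + 1))) * nz ≤ δ / 2 := by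
          rw [div_mul_eq_mul_div, div_le_div_iff₀ (by positivity) (by norm_num)]
          nlinarith
        linarith
      obtain ⟨y, hyD, hyd⟩ := Metric.mem_closure_iff.1 hxcl (min (δ/2) (s * ε))
        (lt_min (by positivity) (by positivity))
      have hyx : ‖y - x‖ < min (δ/2) (s * ε) := by
        rw [← dist_eq_norm, dist_comm]
        exact hyd
      obtain ⟨ny, hny⟩ : ∃ ny : ℝ, ny = ‖y - x‖ := ⟨_, rfl⟩
      have hny0 : 0 ≤ ny := hny ▸ norm_nonneg _
      have hyx1 : ny < δ/2 := lt_of_lt_of_le (hny ▸ hyx) (min_le_left _ _)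
      have hyx2 : ny < s * ε := lt_of_lt_of_le (hny ▸ hyx) (min_le_right _ _)
      obtain ⟨y', hy'def⟩ : ∃ y' : EuclideanSpace ℝ (Fin d),
        y' = s • z + (1 - s) • y := ⟨_, rfl⟩
      have hy'seg : y' ∈ segment ℝ z y := ⟨s, 1 - s, hs0.le, by linarith, by ring, hy'def.symm⟩
      have hy'D : y' ∈ D := hstar z hz y hyD hy'seg
      have hdiff : y' - x = s • (z - x) + (1 - s) • (y - x) := by
        rw [hy'def]; module
      have hnorm : ‖y' - x‖ ≤ s * nz + ny := by
        rw [hdiff, hnz, hny]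
        calc ‖s • (z - x) + (1 - s) • (y - x)‖
            ≤ ‖s • (z - x)‖ + ‖(1 - s) • (y - x)‖ := norm_add_le _ _
          _ = s * ‖z - x‖ + (1 - s) * ‖y - x‖ := by
              rw [norm_smul, norm_smul, Real.norm_eq_abs, Real.norm_eq_abs,
                abs_of_pos hs0, abs_of_pos (by linarith : (0:ℝ) < 1 - s)]
          _ ≤ s * ‖z - x‖ + ‖y - x‖ := by
              nlinarith [norm_nonneg (y - x)]
      have hy'close : ‖y' - x‖ < δ := by
        calc ‖y' - x‖ ≤ s * nz + ny := hnorm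
          _ < δ/2 + δ/2 := by linarith
          _ = δ := by ring
      have hineq := hcd y' hy'D hy'close
      have hexpand : ⟪y' - x, n⟫ = s * cv + (1 - s) * ⟪y - x, n⟫ := by
        rw [hdiff, inner_add_left, real_inner_smul_left, real_inner_smul_left, ← hcv]
      have hCS : -ny ≤ ⟪y - x, n⟫ := by
        have h1 : |⟪y - x, n⟫| ≤ ‖y - x‖ * ‖n‖ := abs_real_inner_le_norm _ _
        rw [hn, mul_one, ← hny] at h1
        linarith [neg_abs_le (⟪y - x, n⟫ : ℝ)]
      have hlhs : s * cv - s * ε ≤ ⟪y' - x, n⟫ := by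
        rw [hexpand]
        have h1 : (1 - s) * (-ny) ≤ (1 - s) * ⟪y - x, n⟫ :=
          mul_le_mul_of_nonneg_left hCS (by linarith)
        nlinarith
      have hrhs : ε * ‖y' - x‖ ≤ s * ε * (nz + ε) := by
        have h1 : ε * ‖y' - x‖ ≤ ε * (s * nz + ny) :=
          mul_le_mul_of_nonneg_left hnorm hε0.le
        nlinarith
      have hchain : s * cv - s * ε ≤ s * ε * (nz + ε) := by
        calc s * cv - s * ε ≤ ⟪y' - x, n⟫ := hlhs
          _ ≤ ε * ‖y' - x‖ := hineq
          _ ≤ s * ε * (nz + ε) := hrhs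
      have h0 : s * (cv - ε) ≤ s * (ε * (nz + ε)) := by linarith [hchain]
      have hd1 : cv - ε ≤ ε * (nz + ε) := le_of_mul_le_mul_left h0 hs0
      have hee : ε * ε ≤ ε := by nlinarith
      have henz : 0 ≤ ε * nz := mul_nonneg hε0.le hnz0
      linarith [hεcv, hd1, hee, henz, hc, hε0]
    by_contra hlt
    push_neg at hlt
    obtain ⟨s, hs1, hs2⟩ := exists_between (max_lt hlt hκ)
    have hs0 : 0 < s := lt_of_le_of_lt (le_max_right _ _) hs1
    have hzball : x₀ + s • n ∈ Metric.ball x₀ κ := by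
      rw [Metric.mem_ball, dist_eq_norm]
      have : x₀ + s • n - x₀ = s • n := by abel
      rw [this, norm_smul, Real.norm_eq_abs, abs_of_pos hs0, hn, mul_one]
      exact hs2
    have h1 := step1 _ hzball
    have h2 : x - (x₀ + s • n) = (x - x₀) - s • n := by abel
    rw [h2, inner_sub_left, real_inner_smul_left, real_inner_self_eq_norm_sq, hn] at h1
    have hvmax : ⟪x - x₀, n⟫ ≤ max (⟪x - x₀, n⟫ : ℝ) 0 := le_max_left _ _
    nlinarith
  · -- normal inequality implies star-shaped
    intro H z hz x hx w hwseg
    by_contra hw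
    rw [segment_eq_image] at hwseg
    obtain ⟨t₀, ht₀, hft₀⟩ := hwseg
    set f : ℝ → EuclideanSpace ℝ (Fin d) := fun t => (1 - t) • z + t • x with hf
    have hfcont : Continuous f := by rw [hf]; fun_prop
    set B : Set ℝ := Set.Icc (0:ℝ) 1 ∩ f ⁻¹' Dᶜ with hB
    have hBc : IsClosed B := isClosed_Icc.inter (hopen.isClosed_compl.preimage hfcont)
    have hBne : B.Nonempty := ⟨t₀, ht₀, by simp only [Set.mem_preimage, Set.mem_compl_iff]; rw [hft₀]; exact hw⟩
    have hBbdd : BddAbove B := BddAbove.mono (Set.inter_subset_left) bddAbove_Icc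
    set T : ℝ := sSup B with hT
    have hTB : T ∈ B := hBc.csSup_mem hBne hBbdd
    have hT01 : T ∈ Set.Icc (0:ℝ) 1 := hTB.1
    have hfT : f T ∉ D := hTB.2
    have hf1 : f 1 = x := by rw [hf]; simp
    have hT1 : T < 1 := by
      rcases lt_or_eq_of_le hT01.2 with h' | h'
      · exact h'
      · exfalso; rw [h', hf1] at hfT; exact hfT hx
    rcases lt_or_eq_of_le hT01.1 with hTpos | hTzero
    · -- T > 0 : apply no_escape with w* = f T, τ = (1-T)/T, point x
      have hwz : f T - z = T • (x - z) := by rw [hf]; module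
      have hxeq : f T + ((1 - T) / T) • (f T - z) = x := by
        rw [hwz, smul_smul, div_mul_cancel₀ _ hTpos.ne', hf]
        module
      have hτpos : (0:ℝ) < (1 - T) / T := div_pos (by linarith) hTpos
      exact no_escape (τ := (1 - T) / T) hopen hbdd hLip hκ H hz hfT
        hτpos (by rw [hxeq]; exact hx)
    · -- T = 0 : z itself is outside D; perturb the center
      have hzD : z ∉ D := by
        have : f 0 = z := by rw [hf]; simp
        rw [← hTzero, this] at hfT
        exact hfT
      set η : ℝ := (κ - dist z x₀) / (‖z - x‖ + 1) with hη
      have hzd : dist z x₀ < κ := Metric.mem_ball.1 hz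
      have hη0 : 0 < η := by
        rw [hη]
        exact div_pos (by linarith) (by positivity)
      have hz₂ball : z + η • (z - x) ∈ Metric.ball x₀ κ := by
        rw [Metric.mem_ball]
        calc dist (z + η • (z - x)) x₀ ≤ dist (z + η • (z - x)) z + dist z x₀ :=
              dist_triangle _ _ _
          _ = η * ‖z - x‖ + dist z x₀ := by
              rw [dist_eq_norm]
              have : z + η • (z - x) - z = η • (z - x) := by abel
              rw [this, norm_smul, Real.norm_eq_abs, abs_of_pos hη0]
          _ < κ := by
              have h1 : η * (‖z - x‖ + 1) = κ - dist z x₀ := by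
                rw [hη]; field_simp
              nlinarith
      have hxeq : z + η⁻¹ • (z - (z + η • (z - x))) = x := by
        have h1 : z - (z + η • (z - x)) = η • (x - z) := by module
        rw [h1, smul_smul, inv_mul_cancel₀ hη0.ne']
        module
      exact no_escape hopen hbdd hLip hκ H hz₂ball hzD
        (by positivity : (0:ℝ) < η⁻¹) (by rw [hxeq]; exact hx)
end
end
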